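/- The function f_e(x) = (1 - e^{-x})/x (with f_e(0)=1) is Lipschitz continuous on [0, ∞) with Lipschitz constant 1/2, i.e., |f_e(x) - f_e(y)| ≤ (1/2)|x - y| for all x, y ≥ 0. -/
import Mathlib


noncomputable def fe (x : ℝ) : ℝ := if x = 0 then 1 else (1 - Real.exp (-x)) / x

lemma fe_eq_integral (x : ℝ) : fe x = ∫ t in (0:ℝ)..1, Real.exp (t * (-x)) := by
  unfold fe
  by_cases hx : x = 0
  · simp [hx]
  · rw [if_neg hx]
    rw [intervalIntegral.integral_comp_mul_right Real.exp (by simpa using hx)]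
    rw [integral_exp, one_mul, zero_mul, Real.exp_zero, smul_eq_mul, inv_neg, neg_mul, mul_sub, neg_sub]
    rw [sub_div, one_div, div_eq_inv_mul, mul_one]

lemma exp_lip {a b : ℝ} (ha : 0 ≤ a) (hb : 0 ≤ b) :
    |Real.exp (-a) - Real.exp (-b)| ≤ |a - b| := by
  wlog h : a ≤ b generalizing a b
  · rw [abs_sub_comm, abs_sub_comm a b]; exact this hb ha (le_of_not_ge h)
  have h1 : Real.exp (-a) - Real.exp (-b) = Real.exp (-a) * (1 - Real.exp (-(b - a))) := by
    rw [mul_sub, mul_one, ← Real.exp_add]; ring_nf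
  have h2 : 1 - Real.exp (-(b - a)) ≤ b - a := by
    have := Real.add_one_le_exp (-(b - a)); linarith
  have h3 : 0 ≤ 1 - Real.exp (-(b - a)) := by
    have : Real.exp (-(b - a)) ≤ 1 := Real.exp_le_one_iff.mpr (by linarith)
    linarith
  have hea : Real.exp (-a) ≤ 1 := Real.exp_le_one_iff.mpr (by linarith)
  have heapos : 0 < Real.exp (-a) := Real.exp_pos _
  rw [h1, abs_of_nonneg (by positivity), abs_sub_comm, abs_of_nonneg (by linarith)]
  calc Real.exp (-a) * (1 - Real.exp (-(b-a))) ≤ 1 * (b - a) :=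
        mul_le_mul hea h2 h3 one_pos.le
    _ = b - a := one_mul _

theorem fe_lipschitz : ∀ x y : ℝ, 0 ≤ x → 0 ≤ y →
    |fe x - fe y| ≤ (1 / 2) * |x - y| := by
  intro x y hx hy
  rw [fe_eq_integral, fe_eq_integral]
  have hix : IntervalIntegrable (fun t => Real.exp (t * (-x))) MeasureTheory.volume 0 1 :=
    (Real.continuous_exp.comp (continuous_id.mul continuous_const)).intervalIntegrable 0 1
  have hiy : IntervalIntegrable (fun t => Real.exp (t * (-y))) MeasureTheory.volume 0 1 :=
    (Real.continuous_exp.comp (continuous_id.mul continuous_const)).intervalIntegrable 0 1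
  rw [← intervalIntegral.integral_sub hix hiy]
  have key : ∀ t ∈ Set.Icc (0:ℝ) 1,
      |Real.exp (t * (-x)) - Real.exp (t * (-y))| ≤ t * |x - y| := by
    intro t ht
    have ht0 := ht.1
    have := exp_lip (a := t * x) (b := t * y) (by positivity) (by positivity)
    have e1 : t * (-x) = -(t * x) := by ring
    have e2 : t * (-y) = -(t * y) := by ring
    rw [e1, e2]
    calc |Real.exp (-(t * x)) - Real.exp (-(t * y))| ≤ |t * x - t * y| := this
      _ = t * |x - y| := by rw [← mul_sub, abs_mul, abs_of_nonneg ht0]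
  calc |∫ t in (0:ℝ)..1, (Real.exp (t * (-x)) - Real.exp (t * (-y)))|
      ≤ ∫ t in (0:ℝ)..1, |Real.exp (t * (-x)) - Real.exp (t * (-y))| := by
        simpa using intervalIntegral.abs_integral_le_integral_abs (by norm_num :
          (0:ℝ) ≤ 1) (f := fun t => Real.exp (t * (-x)) - Real.exp (t * (-y)))
    _ ≤ ∫ t in (0:ℝ)..1, t * |x - y| := by
        apply intervalIntegral.integral_mono_on (by norm_num)
        · exact ((Real.continuous_exp.comp (continuous_id.mul continuous_const)).sub
            (Real.continuous_exp.comp (continuous_id.mul continuous_const))).abs.intervalIntegrable 0 1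
        · exact (continuous_id.mul continuous_const).intervalIntegrable 0 1
        · exact key
    _ = (1 / 2) * |x - y| := by
        rw [intervalIntegral.integral_mul_const, integral_id]
        ring
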